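/- Let σ̂² > 0, P > 0, Γ = P/σ̂², Q(x) = N(x;P), Ŵ(y|x) = N(y−x;σ̂²), and for s > 0 and ρ ∈ (0,1] with sρ < 1 define ε_{s,ρ}(x,y) = ( ∫ Q(x') Ŵ(y|x')^s dx' / Ŵ(y|x)^s )^ρ. Then the double integral ∬_{ℝ²} Q(x) Ŵ(y|x) ε_{s,ρ}(x,y) dx dy is finite and −log ∬_{ℝ²} Q(x) Ŵ(y|x) ε_{s,ρ}(x,y) dx dy = (ρ/2) log(1 + Γ s) + (1/2) log( 1 + ρΓ(1 − s − ρs) / ( Γ + s^{−1} ) ). -/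

import Mathlib

/-!
The inner integral `∫ Q(x') Ŵ(y|x')^s dx'` is a one-dimensional Gaussian integral, so
`Q(x) Ŵ(y|x) ε_{s,ρ}(x,y)` is `(1 + Γs)^{-ρ/2} / (2π √(P σ̂²))` times
`exp (-(a x² + b (y - x)² + c y²))` with `a = 1/(2P)`, `b = (1 - sρ)/(2σ̂²)` and
`c = ρs/(2(σ̂² + sP))`. Integrating first in `y` and then in `x`, this positive definite form
has integral `π / √(ab + ac + bc)`, and `4Pσ̂²(ab + ac + bc)` is the argument of the second
logarithm.
-/

open Real Filter MeasureTheory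

/-- Centered Gaussian density with variance `v`: `N(z; v)`. -/
noncomputable def gauss (z v : ℝ) : ℝ :=
  (Real.sqrt (2 * Real.pi * v))⁻¹ * Real.exp (-(z ^ 2) / (2 * v))

/-- Mismatched exponent density for Gaussian input `N(x;P)` and
nearest-neighbor metric `N(y−x;σ̂²)`. -/
noncomputable def epsGauss (σ2 P s ρ x y : ℝ) : ℝ :=
  ((∫ x', gauss x' P * gauss (y - x') σ2 ^ s) / gauss (y - x) σ2 ^ s) ^ ρ

lemma exp_neg_quadratic_eq {b : ℝ} (hb : 0 < b) (c d x : ℝ) :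
    exp (-(b * x ^ 2 + c * x + d)) =
      exp (-b * (x + c / (2 * b)) ^ 2) * exp (c ^ 2 / (4 * b) - d) := by
  rw [← exp_add]
  congr 1
  field_simp
  ring

lemma integrable_exp_neg_quadratic {b : ℝ} (hb : 0 < b) (c d : ℝ) :
    Integrable fun x : ℝ => exp (-(b * x ^ 2 + c * x + d)) := by
  simp_rw [exp_neg_quadratic_eq hb]
  exact ((integrable_exp_neg_mul_sq hb).comp_add_right _).mul_const _

lemma integral_exp_neg_quadratic {b : ℝ} (hb : 0 < b) (c d : ℝ) :
    ∫ x : ℝ, exp (-(b * x ^ 2 + c * x + d)) = √(π / b) * exp (c ^ 2 / (4 * b) - d) := by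
  simp_rw [exp_neg_quadratic_eq hb, integral_mul_const]
  rw [integral_add_right_eq_self (fun x => exp (-b * x ^ 2)), integral_gaussian]

section QuadraticForm

variable {a b c : ℝ}

lemma exp_neg_quadForm_eq (x y : ℝ) :
    exp (-(a * x ^ 2 + b * (y - x) ^ 2 + c * y ^ 2)) =
      exp (-((b + c) * y ^ 2 + -(2 * b * x) * y + (a + b) * x ^ 2)) := by
  congr 1; ring

variable (hbc : 0 < b + c) (hdet : 0 < a * b + a * c + b * c)
include hbc

lemma integral_exp_neg_quadForm_right (x : ℝ) :
    ∫ y : ℝ, exp (-(a * x ^ 2 + b * (y - x) ^ 2 + c * y ^ 2)) =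
      √(π / (b + c)) * exp (-((a * b + a * c + b * c) / (b + c) * x ^ 2 + 0 * x + 0)) := by
  simp_rw [exp_neg_quadForm_eq, integral_exp_neg_quadratic hbc]
  congr 2
  field_simp
  ring

include hdet

lemma integrable_exp_neg_quadForm :
    Integrable fun q : ℝ × ℝ => exp (-(a * q.1 ^ 2 + b * (q.2 - q.1) ^ 2 + c * q.2 ^ 2)) := by
  rw [Measure.volume_eq_prod, integrable_prod_iff (by fun_prop)]
  refine ⟨.of_forall fun x => ?_, ?_⟩
  · simp_rw [exp_neg_quadForm_eq]
    exact integrable_exp_neg_quadratic hbc _ _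
  · simp_rw [norm_of_nonneg (exp_pos _).le, integral_exp_neg_quadForm_right hbc]
    exact (integrable_exp_neg_quadratic (by positivity) _ _).const_mul _

lemma integral_exp_neg_quadForm :
    ∫ q : ℝ × ℝ, exp (-(a * q.1 ^ 2 + b * (q.2 - q.1) ^ 2 + c * q.2 ^ 2)) =
      π / √(a * b + a * c + b * c) := by
  rw [Measure.volume_eq_prod, integral_prod _ (integrable_exp_neg_quadForm hbc hdet)]
  simp_rw [integral_exp_neg_quadForm_right hbc, integral_const_mul]
  have hπ := pi_pos
  rw [integral_exp_neg_quadratic (by positivity), zero_pow two_ne_zero, zero_div, sub_zero,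
    exp_zero, mul_one, ← sqrt_mul (by positivity),
    show π / (b + c) * (π / ((a * b + a * c + b * c) / (b + c))) = π ^ 2 / (a * b + a * c + b * c)
      by field_simp, sqrt_div' _ hdet.le, sqrt_sq hπ.le]

end QuadraticForm

lemma gauss_rpow (z v s : ℝ) :
    gauss z v ^ s = (√(2 * π * v))⁻¹ ^ s * exp (-(s * z ^ 2 / (2 * v))) := by
  rw [gauss, mul_rpow (by positivity) (exp_pos _).le, ← exp_mul]
  congr 2
  ring

section Gaussian

variable {σ2 P s : ℝ} (hσ : 0 < σ2) (hP : 0 < P) (hs : 0 ≤ s)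
include hσ hP hs

lemma integral_gauss_mul_gauss_rpow (y : ℝ) :
    ∫ x, gauss x P * gauss (y - x) σ2 ^ s =
      (√(1 + P / σ2 * s))⁻¹ * (√(2 * π * σ2))⁻¹ ^ s * exp (-(s * y ^ 2 / (2 * (σ2 + s * P)))) := by
  have hα : 0 < (2 * P)⁻¹ + s / (2 * σ2) := by positivity
  have hintegrand : ∀ x, gauss x P * gauss (y - x) σ2 ^ s =
      ((√(2 * π * P))⁻¹ * (√(2 * π * σ2))⁻¹ ^ s) *
        exp (-(((2 * P)⁻¹ + s / (2 * σ2)) * x ^ 2 + -(s / σ2 * y) * x + s / (2 * σ2) * y ^ 2)) := by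
    intro x
    rw [gauss, gauss_rpow, mul_mul_mul_comm, ← exp_add]
    congr 2
    field_simp
    ring
  have hnorm : (√(2 * π * P))⁻¹ * √(π / ((2 * P)⁻¹ + s / (2 * σ2))) = (√(1 + P / σ2 * s))⁻¹ := by
    rw [← sqrt_inv, ← sqrt_mul (by positivity), ← sqrt_inv]
    congr 1
    field_simp
  simp_rw [hintegrand, integral_const_mul, integral_exp_neg_quadratic hα, ← hnorm, ← mul_assoc,
    mul_right_comm (√(2 * π * P))⁻¹]
  have : σ2 + s * P ≠ 0 := by positivity
  congr 2
  field_simp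
  ring

lemma epsGauss_eq (ρ x y : ℝ) :
    epsGauss σ2 P s ρ x y = (√(1 + P / σ2 * s))⁻¹ ^ ρ *
      exp (ρ * (s * (y - x) ^ 2 / (2 * σ2) - s * y ^ 2 / (2 * (σ2 + s * P)))) := by
  have hB : (0 : ℝ) < (√(2 * π * σ2))⁻¹ ^ s := by positivity
  rw [epsGauss, integral_gauss_mul_gauss_rpow hσ hP hs, gauss_rpow, mul_div_mul_comm,
    mul_div_cancel_right₀ _ hB.ne', ← exp_sub, mul_rpow (by positivity) (exp_pos _).le, ← exp_mul]
  congr 2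
  ring

lemma gauss_mul_gauss_mul_epsGauss (ρ x y : ℝ) :
    gauss x P * gauss (y - x) σ2 * epsGauss σ2 P s ρ x y =
      (√(1 + P / σ2 * s))⁻¹ ^ ρ * (√(2 * π * P) * √(2 * π * σ2))⁻¹ *
        exp (-((2 * P)⁻¹ * x ^ 2 + (1 - s * ρ) / (2 * σ2) * (y - x) ^ 2 +
          ρ * s / (2 * (σ2 + s * P)) * y ^ 2)) := by
  have : σ2 + s * P ≠ 0 := by positivity
  rw [epsGauss_eq hσ hP hs, gauss, gauss, mul_inv]
  calc _ = (√(1 + P / σ2 * s))⁻¹ ^ ρ * ((√(2 * π * P))⁻¹ * (√(2 * π * σ2))⁻¹) *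
        (exp (-x ^ 2 / (2 * P)) * exp (-(y - x) ^ 2 / (2 * σ2)) *
          exp (ρ * (s * (y - x) ^ 2 / (2 * σ2) - s * y ^ 2 / (2 * (σ2 + s * P))))) := by ring
    _ = _ := by
      rw [← exp_add, ← exp_add]
      congr 2
      field_simp
      ring

end Gaussian

lemma four_mul_det_eq {σ2 P s : ℝ} (hσ : 0 < σ2) (hP : 0 < P) (hs : 0 < s) (ρ : ℝ) :
    4 * P * σ2 * ((2 * P)⁻¹ * ((1 - s * ρ) / (2 * σ2)) + (2 * P)⁻¹ * (ρ * s / (2 * (σ2 + s * P))) +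
        (1 - s * ρ) / (2 * σ2) * (ρ * s / (2 * (σ2 + s * P)))) =
      1 + ρ * (P / σ2) * (1 - s - ρ * s) / (P / σ2 + s⁻¹) := by
  have : σ2 + s * P ≠ 0 := by positivity
  field_simp
  ring

lemma neg_log_mul_inv_sqrt_mul_div_sqrt {u P σ2 D : ℝ} (hu : 0 < u) (hP : 0 < P) (hσ : 0 < σ2)
    (hD : 0 < D) (ρ : ℝ) :
    -log ((√u)⁻¹ ^ ρ * (√(2 * π * P) * √(2 * π * σ2))⁻¹ * (π / √D)) =
      ρ / 2 * log u + 1 / 2 * log (4 * P * σ2 * D) := by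
  have hπ := pi_pos
  have hnorm : (√(2 * π * P) * √(2 * π * σ2))⁻¹ * (π / √D) = (√(4 * P * σ2 * D))⁻¹ := by
    rw [← sqrt_mul (by positivity), inv_mul_eq_div, div_div, ← sqrt_mul (by positivity),
      show D * (2 * π * P * (2 * π * σ2)) = π ^ 2 * (4 * P * σ2 * D) by ring,
      sqrt_mul (sq_nonneg π), sqrt_sq hπ.le, div_mul_cancel_left₀ hπ.ne']
  rw [mul_assoc, hnorm, log_mul (by positivity) (by positivity), log_rpow (by positivity),
    log_inv, log_inv, log_sqrt hu.le, log_sqrt (by positivity)]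
  ring

theorem stmt17_general (σ2 P s ρ : ℝ) (hσ : 0 < σ2) (hP : 0 < P) (hs : 0 < s)
    (hρ0 : 0 < ρ) (hsρ : s * ρ < 1) :
    Integrable (fun q : ℝ × ℝ => gauss q.1 P * gauss (q.2 - q.1) σ2 * epsGauss σ2 P s ρ q.1 q.2) ∧
    -Real.log (∫ q : ℝ × ℝ, gauss q.1 P * gauss (q.2 - q.1) σ2 * epsGauss σ2 P s ρ q.1 q.2)
      = (ρ / 2) * Real.log (1 + (P / σ2) * s)
        + (1 / 2) * Real.log (1 + ρ * (P / σ2) * (1 - s - ρ * s) / ((P / σ2) + s⁻¹)) := by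
  have ha : 0 < (2 * P)⁻¹ := by positivity
  have hb : 0 < (1 - s * ρ) / (2 * σ2) := div_pos (by linarith) (by positivity)
  have hc : 0 < ρ * s / (2 * (σ2 + s * P)) := by positivity
  have hbc := add_pos hb hc
  have hdet := add_pos (add_pos (mul_pos ha hb) (mul_pos ha hc)) (mul_pos hb hc)
  simp_rw [gauss_mul_gauss_mul_epsGauss hσ hP hs.le]
  refine ⟨(integrable_exp_neg_quadForm hbc hdet).const_mul _, ?_⟩
  rw [integral_const_mul, integral_exp_neg_quadForm hbc hdet,
    neg_log_mul_inv_sqrt_mul_div_sqrt (by positivity) hP hσ hdet, four_mul_det_eq hσ hP hs]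

/-- Closed form of the Gallager `E^ML` term for Gaussian codebooks with
nearest-neighbor decoding, where `Γ = P/σ̂²`. -/
theorem stmt17 (σ2 P s ρ : ℝ) (hσ : 0 < σ2) (hP : 0 < P) (hs : 0 < s)
    (hρ0 : 0 < ρ) (hρ1 : ρ ≤ 1) (hsρ : s * ρ < 1) :
    Integrable (fun q : ℝ × ℝ => gauss q.1 P * gauss (q.2 - q.1) σ2 * epsGauss σ2 P s ρ q.1 q.2) ∧
    -Real.log (∫ q : ℝ × ℝ, gauss q.1 P * gauss (q.2 - q.1) σ2 * epsGauss σ2 P s ρ q.1 q.2)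
      = (ρ / 2) * Real.log (1 + (P / σ2) * s)
        + (1 / 2) * Real.log (1 + ρ * (P / σ2) * (1 - s - ρ * s) / ((P / σ2) + s⁻¹)) :=
  stmt17_general σ2 P s ρ hσ hP hs hρ0 hsρ
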